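/- arXiv:1303.7297 — 2 statements merged into one kernel-verified Lean document; each statement's English description precedes it below -/
import Mathlib

section
/- Let 0 < t < 1 and set z_* = −1/(1−t). Then the t-logistic distribution function satisfies G_t(z) = [(1−t)(z−z_*)]^{1/(1−t)} + o((z−z_*)^{1/(1−t)}) as z → z_* from above; equivalently, lim_{z→z_*+} G_t(z) / ((1−t)(z−z_*))^{1/(1−t)} = 1. Moreover, γ_t(z) = O((z−z_*)^{1/(1−t)}) = o(z−z_*) as z → z_* from above. -/
open ENNReal Filter Topology Asymptotics

/-- The `t`-exponential function, with values in `[0,∞]`. -/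
noncomputable def qexpE (t z : ℝ) : ℝ≥0∞ :=
  if t = 1 then ENNReal.ofReal (Real.exp z)
  else (ENNReal.ofReal (1 + (1 - t) * z)) ^ (1 / (1 - t))

/-!
Write `s = z - z_*`, `a = (1 - t) s = 1 + (1 - t) z`, `g = (1 - t) γ_t(z)` and `p = 1/(1 - t) ≥ 1`.
The defining equation of `γ_t` reads `[a - g]₊^p + [1 - g]₊^p = 1`; for `0 < a < 1` it forces
`0 < g < a`, and then `g = 1 - (1 - g) ≤ 1 - (1 - g)^p = (a - g)^p ≤ a^p`. Hence `γ_t = O(s^p)`,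
which is `o(s)` because `p > 1`, and `G_t(z) / a^p = (1 - γ_t(z)/s)^p → 1`.
-/

section Balance

variable {p a g : ℝ}

lemma pos_of_ofReal_rpow_add_eq_one (hp : 0 < p) (ha : 0 < a)
    (h : ENNReal.ofReal (a - g) ^ p + ENNReal.ofReal (1 - g) ^ p = 1) : 0 < g := by
  by_contra! hg
  have hU : 0 < ENNReal.ofReal (a - g) ^ p :=
    ENNReal.rpow_pos (ENNReal.ofReal_pos.2 (by linarith)) ENNReal.ofReal_ne_top
  have hV : 1 ≤ ENNReal.ofReal (1 - g) ^ p :=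
    ENNReal.one_le_rpow (ENNReal.one_le_ofReal.2 (by linarith)) hp
  have := ENNReal.lt_add_right ENNReal.one_ne_top hU.ne'
  exact (h ▸ this.trans_le (by rw [add_comm]; gcongr)).false

lemma lt_of_ofReal_rpow_add_eq_one (hp : 0 < p) (hg : 0 < g)
    (h : ENNReal.ofReal (a - g) ^ p + ENNReal.ofReal (1 - g) ^ p = 1) : g < a := by
  have hV : ENNReal.ofReal (1 - g) ^ p < 1 :=
    ENNReal.rpow_lt_one (ENNReal.ofReal_lt_one.2 (by linarith)) hp
  have hU : ENNReal.ofReal (a - g) ^ p ≠ 0 := by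
    rintro hU
    rw [hU, zero_add] at h
    exact hV.ne h
  by_contra! hag
  exact hU (by rw [ENNReal.ofReal_of_nonpos (by linarith), ENNReal.zero_rpow_of_pos hp])

lemma le_rpow_of_ofReal_rpow_add_eq_one (hp : 1 ≤ p) (hg : 0 < g) (hga : g < a) (ha : a < 1)
    (h : ENNReal.ofReal (a - g) ^ p + ENNReal.ofReal (1 - g) ^ p = 1) : g ≤ a ^ p := by
  have hp0 : 0 ≤ p := by linarith
  have hag : 0 ≤ a - g := by linarith
  have hg1 : 0 ≤ 1 - g := by linarith
  rw [ENNReal.ofReal_rpow_of_nonneg hag hp0, ENNReal.ofReal_rpow_of_nonneg hg1 hp0,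
    ← ENNReal.ofReal_add (by positivity) (by positivity), ENNReal.ofReal_eq_one] at h
  have hV : (1 - g) ^ p ≤ 1 - g := Real.rpow_le_self_of_le_one (by linarith) (by linarith) hp
  have hU : (a - g) ^ p ≤ a ^ p := Real.rpow_le_rpow (by linarith) (by linarith) hp0
  linarith

end Balance

lemma sub_rpow_isLittleO_sub {p : ℝ} (hp : 1 < p) (c : ℝ) :
    (fun z : ℝ => (z - c) ^ p) =o[𝓝[>] c] (fun z => z - c) := by
  have hpos : ∀ᶠ z in 𝓝[>] c, 0 < z - c := by
    filter_upwards [self_mem_nhdsWithin] with z hz using sub_pos.2 hz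
  rw [isLittleO_iff_tendsto' (hpos.mono fun z hz h0 => absurd h0 hz.ne')]
  have hsub : Tendsto (fun z : ℝ => z - c) (𝓝[>] c) (𝓝 0) := by
    simpa using (tendsto_id.sub_const c).mono_left (nhdsWithin_le_nhds (a := c))
  have := hsub.rpow_const (p := p - 1) (Or.inr (by linarith))
  rw [Real.zero_rpow (by linarith)] at this
  refine this.congr' ?_
  filter_upwards [hpos] with z hz using Real.rpow_sub_one hz.ne' p

lemma isBigO_sub_rpow_of_mul_le_mul_sub_rpow {c k p : ℝ} {f : ℝ → ℝ} (hk : 0 < k)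
    (h : ∀ᶠ z in 𝓝[>] c, 0 ≤ f z ∧ k * f z ≤ (k * (z - c)) ^ p) :
    f =O[𝓝[>] c] (fun z => (z - c) ^ p) := by
  refine IsBigO.of_bound (k ^ p / k) ?_
  filter_upwards [h, self_mem_nhdsWithin] with z hfz hz
  obtain ⟨hf0, hfle⟩ := hfz
  have hs : 0 ≤ z - c := (sub_pos.2 hz).le
  rw [Real.mul_rpow hk.le hs] at hfle
  rw [Real.norm_of_nonneg hf0, Real.norm_of_nonneg (Real.rpow_nonneg hs p),
    div_mul_eq_mul_div, le_div_iff₀ hk]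
  linarith

lemma qexpE_of_ne_one {t : ℝ} (ht : t ≠ 1) (z : ℝ) :
    qexpE t z = ENNReal.ofReal (1 + (1 - t) * z) ^ (1 / (1 - t)) := if_neg ht

lemma one_add_mul_eq_mul_sub_boundary {t : ℝ} (ht : t ≠ 1) (z : ℝ) :
    1 + (1 - t) * z = (1 - t) * (z - (-1 / (1 - t))) := by
  have : 1 - t ≠ 0 := sub_ne_zero.2 ht.symm
  field_simp
  ring

section TLogistic

variable {t γ z : ℝ}

lemma tLogistic_gamma_bounds (ht0 : 0 ≤ t) (ht1 : t < 1)
    (hγ : qexpE t (z - γ) + qexpE t (-γ) = 1) (hz : -1 / (1 - t) < z) (hz0 : z < 0) :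
    0 < γ ∧ γ < z - (-1 / (1 - t)) ∧
      (1 - t) * γ ≤ ((1 - t) * (z - (-1 / (1 - t)))) ^ (1 / (1 - t)) := by
  have h1t : 0 < 1 - t := sub_pos.2 ht1
  have hp : 1 ≤ 1 / (1 - t) := one_le_one_div h1t (by linarith)
  set a := (1 - t) * (z - (-1 / (1 - t)))
  have ha : 1 + (1 - t) * z = a := one_add_mul_eq_mul_sub_boundary ht1.ne z
  have ha0 : 0 < a := mul_pos h1t (sub_pos.2 hz)
  have ha1 : a < 1 := by nlinarith
  have h : ENNReal.ofReal (a - (1 - t) * γ) ^ (1 / (1 - t)) +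
      ENNReal.ofReal (1 - (1 - t) * γ) ^ (1 / (1 - t)) = 1 := by
    rw [qexpE_of_ne_one ht1.ne, qexpE_of_ne_one ht1.ne] at hγ
    convert hγ using 4 <;> linarith
  have hg := pos_of_ofReal_rpow_add_eq_one (by positivity) ha0 h
  have hga := lt_of_ofReal_rpow_add_eq_one (by positivity) hg h
  exact ⟨pos_of_mul_pos_right hg h1t.le, lt_of_mul_lt_mul_left hga h1t.le,
    le_rpow_of_ofReal_rpow_add_eq_one hp hg hga ha1 h⟩

lemma qexpE_sub_toReal_div (ht : t < 1) (hz : -1 / (1 - t) < z) (hγ : γ ≤ z - (-1 / (1 - t))) :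
    (qexpE t (z - γ)).toReal / ((1 - t) * (z - (-1 / (1 - t)))) ^ (1 / (1 - t)) =
      (1 - γ / (z - (-1 / (1 - t)))) ^ (1 / (1 - t)) := by
  set s := z - (-1 / (1 - t))
  have h1t : 0 < 1 - t := sub_pos.2 ht
  have hs : 0 < s := sub_pos.2 hz
  have hsγ : 0 ≤ 1 - γ / s := by rwa [sub_nonneg, div_le_one hs]
  have : 1 + (1 - t) * (z - γ) = (1 - t) * s * (1 - γ / s) := by
    rw [show (1 - t) * s * (1 - γ / s) = (1 - t) * s - (1 - t) * γ by field_simp,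
      ← one_add_mul_eq_mul_sub_boundary ht.ne]
    ring
  rw [qexpE_of_ne_one ht.ne, this, ENNReal.ofReal_rpow_of_nonneg (by positivity) (by positivity),
    ENNReal.toReal_ofReal (by positivity), Real.mul_rpow (by positivity) hsγ,
    mul_div_cancel_left₀ _ (by positivity)]

end TLogistic

/-- let `0 < t < 1` and `z_* = -1/(1-t)`.  The `t`-logistic
distribution function `G_t(z) = exp_t(z - γ_t(z))` satisfies
`G_t(z) = [(1-t)(z-z_*)]^{1/(1-t)} + o((z-z_*)^{1/(1-t)})` as `z → z_*+`;
equivalently `lim_{z→z_*+} G_t(z) / ((1-t)(z-z_*))^{1/(1-t)} = 1`.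
Moreover `γ_t(z) = O((z-z_*)^{1/(1-t)}) = o(z-z_*)` as `z → z_*+`. -/
theorem t_logistic_boundary_t_in_zero_one (t : ℝ) (ht0 : 0 < t) (ht1 : t < 1)
    (γ : ℝ → ℝ)
    (hγ : ∀ z : ℝ, qexpE t (z - γ z) + qexpE t (-(γ z)) = 1) :
    Tendsto
        (fun z : ℝ => (qexpE t (z - γ z)).toReal /
          ((1 - t) * (z - (-1 / (1 - t)))) ^ (1 / (1 - t)))
        (𝓝[>] (-1 / (1 - t))) (𝓝 1) ∧
      γ =O[𝓝[>] (-1 / (1 - t))] (fun z : ℝ => (z - (-1 / (1 - t))) ^ (1 / (1 - t))) ∧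
      γ =o[𝓝[>] (-1 / (1 - t))] (fun z : ℝ => z - (-1 / (1 - t))) := by
  have h1t : 0 < 1 - t := sub_pos.2 ht1
  set p := 1 / (1 - t)
  set zs := -1 / (1 - t)
  have hbounds : ∀ᶠ z in 𝓝[>] zs,
      0 < γ z ∧ γ z < z - zs ∧ (1 - t) * γ z ≤ ((1 - t) * (z - zs)) ^ p := by
    have hzs : zs < 0 := div_neg_of_neg_of_pos (by norm_num) h1t
    filter_upwards [self_mem_nhdsWithin, nhdsWithin_le_nhds (eventually_lt_nhds hzs)]
      with z hz hz0 using tLogistic_gamma_bounds ht0.le ht1 (hγ z) hz hz0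
  have hO : γ =O[𝓝[>] zs] (fun z => (z - zs) ^ p) :=
    isBigO_sub_rpow_of_mul_le_mul_sub_rpow h1t (hbounds.mono fun z h => ⟨h.1.le, h.2.2⟩)
  have ho : γ =o[𝓝[>] zs] (fun z => z - zs) :=
    hO.trans_isLittleO (sub_rpow_isLittleO_sub (one_lt_one_div h1t (by linarith)) zs)
  refine ⟨?_, hO, ho⟩
  have hlim : Tendsto (fun z => (1 - γ z / (z - zs)) ^ p) (𝓝[>] zs) (𝓝 1) := by
    simpa using ((tendsto_const_nhds (x := (1 : ℝ))).sub ho.tendsto_div_nhds_zero).rpow_const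
      (p := p) (Or.inr (by positivity))
  refine hlim.congr' ?_
  filter_upwards [hbounds, self_mem_nhdsWithin] with z hγz hz
  exact (qexpE_sub_toReal_div ht1 hz hγz.2.1.le).symm
end

section
/- Let 0 ≤ q ≤ 1 and κ > 0. Let ξ_1, …, ξ_J ∈ ℝ^p be distinct points not contained in any affine hyperplane of ℝ^p, and let p_1, …, p_J > 0 with Σ_j p_j = 1. Let x_1, …, x_n ∈ {ξ_1, …, ξ_J} (n ≥ 0). Define Θ = {(α,β) ∈ ℝ × ℝ^p : 1 + (1−q)(α + βᵀξ_j) > 0 for all j = 1,…,J} and, on Θ, L(α,β) = −Σ_{j=1}^J p_j exp_q(α + βᵀξ_j) + Σ_{i=1}^n log exp_q(α + βᵀx_i) + κ Σ_{j=1}^J p_j log exp_q(α + βᵀξ_j). Then L is a concave function on the convex set Θ (since −exp_q(z) is concave when q ≥ 0 and log exp_q(z) is concave when q ≤ 1), and the maximizer of L on Θ is unique. -/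
open Filter Topology

/-- The `q`-exponential function (real-valued; finite and strictly positive on
the parameter set `Θ` considered below). -/
noncomputable def qexp (q z : ℝ) : ℝ :=
  if q = 1 then Real.exp z else (max (1 + (1 - q) * z) 0) ^ (1 / (1 - q))

/-- The penalized log-likelihood
`L(α,β) = -Σ_j p_j exp_q(α+βᵀξ_j) + Σ_i log exp_q(α+βᵀx_i)
          + κ Σ_j p_j log exp_q(α+βᵀξ_j)`. -/
noncomputable def penLogLik (q κ : ℝ) {J p n : ℕ}
    (w : Fin J → ℝ) (ξ : Fin J → Fin p → ℝ) (x : Fin n → Fin p → ℝ)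
    (ab : ℝ × (Fin p → ℝ)) : ℝ :=
  -(∑ j, w j * qexp q (ab.1 + ∑ i, ab.2 i * ξ j i))
    + (∑ i, Real.log (qexp q (ab.1 + ∑ k, ab.2 k * x i k)))
    + κ * ∑ j, w j * Real.log (qexp q (ab.1 + ∑ i, ab.2 i * ξ j i))


/-!
Writing `ℓ_v(α, β) = α + βᵀv`, the objective is `L = Σ_j p_j G(ℓ_{ξ_j}) + Σ_i log exp_q(ℓ_{x_i})`
with `G = -exp_q + κ log exp_q`. On `{z | 1 + (1 - q) z > 0}` the function `exp_q` is convex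
(for `q < 1` it is a power `≥ 1` of an affine function), `log exp_q` is concave (affine for `q = 1`,
a positive multiple of `log` of an affine function for `q < 1`), and `G` is strictly concave (its
`-exp` part for `q = 1`, its `log` part for `q < 1`). Since the `ξ_j` lie on no affine hyperplane,
the linear forms `ℓ_{ξ_j}` separate points of `ℝ × ℝᵖ`, so `L` is strictly concave on `Θ` and has
at most one maximizer.
-/

open Real Set

def qexpDomain (q : ℝ) : Set ℝ := {z | 0 < 1 + (1 - q) * z}

lemma one_add_mul_add_mul {c x y a b : ℝ} (hab : a + b = 1) :
    1 + c * (a * x + b * y) = a * (1 + c * x) + b * (1 + c * y) := by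
  linear_combination -hab

lemma convex_qexpDomain (q : ℝ) : Convex ℝ (qexpDomain q) := by
  intro x hx y hy a b ha hb hab
  show 0 < 1 + (1 - q) * (a • x + b • y)
  simpa only [smul_eq_mul, one_add_mul_add_mul hab, mem_Ioi] using convex_Ioi 0 hx hy ha hb hab

lemma qexp_one (z : ℝ) : qexp 1 z = exp z := if_pos rfl

lemma qexp_of_mem_qexpDomain {q z : ℝ} (hq : q ≠ 1) (hz : z ∈ qexpDomain q) :
    qexp q z = (1 + (1 - q) * z) ^ (1 / (1 - q)) := by
  rw [qexp, if_neg hq, max_eq_left (le_of_lt hz)]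

lemma log_qexp_of_mem_qexpDomain {q z : ℝ} (hq : q ≠ 1) (hz : z ∈ qexpDomain q) :
    log (qexp q z) = 1 / (1 - q) * log (1 + (1 - q) * z) := by
  rw [qexp_of_mem_qexpDomain hq hz, log_rpow hz]

lemma StrictConcaveOn.const_mul {E : Type*} [AddCommMonoid E] [Module ℝ E] {s : Set E}
    {f : E → ℝ} {c : ℝ} (hc : 0 < c) (hf : StrictConcaveOn ℝ s f) :
    StrictConcaveOn ℝ s fun z => c * f z := by
  refine ⟨hf.1, fun x hx y hy hxy a b ha hb hab => ?_⟩
  have h := mul_lt_mul_of_pos_left (hf.2 hx hy hxy ha hb hab) hc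
  simp only [smul_eq_mul] at h ⊢
  linarith

lemma convexOn_qexp {q : ℝ} (hq0 : 0 ≤ q) (hq1 : q < 1) : ConvexOn ℝ (qexpDomain q) (qexp q) := by
  refine ⟨convex_qexpDomain q, fun x hx y hy a b ha hb hab => ?_⟩
  have hexp : 1 ≤ 1 / (1 - q) := by rw [le_div_iff₀ (by linarith)]; linarith
  have h := (convexOn_rpow hexp).2 (mem_Ici.2 (le_of_lt hx)) (mem_Ici.2 (le_of_lt hy)) ha hb hab
  rw [qexp_of_mem_qexpDomain hq1.ne hx, qexp_of_mem_qexpDomain hq1.ne hy,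
    qexp_of_mem_qexpDomain hq1.ne (convex_qexpDomain q hx hy ha hb hab)]
  simp only [smul_eq_mul] at h ⊢
  rwa [one_add_mul_add_mul hab]

lemma strictConcaveOn_log_qexp {q : ℝ} (hq : q < 1) :
    StrictConcaveOn ℝ (qexpDomain q) fun z => log (qexp q z) := by
  have hc : 0 < 1 - q := by linarith
  refine StrictConcaveOn.congr ?_ fun z hz => (log_qexp_of_mem_qexpDomain hq.ne hz).symm
  refine StrictConcaveOn.const_mul (one_div_pos.2 hc)
    ⟨convex_qexpDomain q, fun x hx y hy hxy a b ha hb hab => ?_⟩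
  have hne : 1 + (1 - q) * x ≠ 1 + (1 - q) * y := by
    simpa only [ne_eq, add_right_inj, mul_right_inj' hc.ne'] using hxy
  have h := strictConcaveOn_log_Ioi.2 hx hy hne ha hb hab
  simp only [smul_eq_mul] at h ⊢
  rwa [one_add_mul_add_mul hab]

lemma concaveOn_log_qexp {q : ℝ} (hq : q ≤ 1) :
    ConcaveOn ℝ (qexpDomain q) fun z => log (qexp q z) := by
  rcases hq.lt_or_eq with hq | rfl
  · exact (strictConcaveOn_log_qexp hq).concaveOn
  · exact (concaveOn_id (convex_qexpDomain 1)).congr fun z _ => by simp [qexp_one]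

lemma strictConcaveOn_neg_qexp_add_mul_log_qexp {q κ : ℝ} (hq0 : 0 ≤ q) (hq1 : q ≤ 1)
    (hκ : 0 < κ) :
    StrictConcaveOn ℝ (qexpDomain q) fun z => -qexp q z + κ * log (qexp q z) := by
  rcases hq1.lt_or_eq with hq1 | rfl
  · exact (convexOn_qexp hq0 hq1).neg.add_strictConcaveOn
      ((strictConcaveOn_log_qexp hq1).const_mul hκ)
  · have hexp : StrictConvexOn ℝ (qexpDomain 1) (qexp 1) :=
      (strictConvexOn_exp.subset (subset_univ _) (convex_qexpDomain 1)).congr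
        fun z _ => (qexp_one z).symm
    exact hexp.neg.add_concaveOn ((concaveOn_log_qexp le_rfl).smul hκ.le)

section LinearForms

variable {ι E : Type*} [AddCommGroup E] [Module ℝ E] {s : ι → Set ℝ} {ℓ : ι → E →ₗ[ℝ] ℝ}

lemma convex_setOf_forall_apply_mem (hs : ∀ i, Convex ℝ (s i)) :
    Convex ℝ {θ | ∀ i, ℓ i θ ∈ s i} := by
  intro θ hθ θ' hθ' a b ha hb hab i
  simpa only [map_add, map_smul] using hs i (hθ i) (hθ' i) ha hb hab

variable [Fintype ι] {g : ι → ℝ → ℝ}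

lemma ConcaveOn.sum_comp_linearMap (hg : ∀ i, ConcaveOn ℝ (s i) (g i)) :
    ConcaveOn ℝ {θ | ∀ i, ℓ i θ ∈ s i} fun θ => ∑ i, g i (ℓ i θ) := by
  refine ⟨convex_setOf_forall_apply_mem fun i => (hg i).1,
    fun θ hθ θ' hθ' a b ha hb hab => ?_⟩
  simp only [smul_eq_mul, map_add, map_smul, Finset.mul_sum, ← Finset.sum_add_distrib]
  refine Finset.sum_le_sum fun i _ => ?_
  simpa only [smul_eq_mul] using (hg i).2 (hθ i) (hθ' i) ha hb hab

lemma StrictConcaveOn.sum_comp_linearMap (hg : ∀ i, StrictConcaveOn ℝ (s i) (g i))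
    (hℓ : Function.Injective fun θ i => ℓ i θ) :
    StrictConcaveOn ℝ {θ | ∀ i, ℓ i θ ∈ s i} fun θ => ∑ i, g i (ℓ i θ) := by
  refine ⟨convex_setOf_forall_apply_mem fun i => (hg i).1,
    fun θ hθ θ' hθ' hne a b ha hb hab => ?_⟩
  obtain ⟨i₁, hi₁⟩ := Function.ne_iff.1 (hℓ.ne hne)
  simp only [smul_eq_mul, map_add, map_smul, Finset.mul_sum, ← Finset.sum_add_distrib]
  refine Finset.sum_lt_sum (fun i _ => ?_) ⟨i₁, Finset.mem_univ _, ?_⟩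
  · simpa only [smul_eq_mul] using (hg i).concaveOn.2 (hθ i) (hθ' i) ha.le hb.le hab
  · simpa only [smul_eq_mul] using (hg i₁).2 (hθ i₁) (hθ' i₁) hi₁ ha hb hab

end LinearForms

def linearPredictor {m : Type*} [Fintype m] (v : m → ℝ) : ℝ × (m → ℝ) →ₗ[ℝ] ℝ where
  toFun θ := θ.1 + ∑ k, θ.2 k * v k
  map_add' θ θ' := by
    simp only [Prod.fst_add, Prod.snd_add, Pi.add_apply, add_mul, Finset.sum_add_distrib]
    ring
  map_smul' c θ := by
    simp only [Prod.smul_fst, Prod.smul_snd, Pi.smul_apply, smul_eq_mul, mul_assoc,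
      ← Finset.mul_sum, RingHom.id_apply, mul_add]

@[simp]
lemma linearPredictor_apply {m : Type*} [Fintype m] (v : m → ℝ) (θ : ℝ × (m → ℝ)) :
    linearPredictor v θ = θ.1 + ∑ k, θ.2 k * v k := rfl

lemma injective_linearPredictor_of_not_subset_hyperplane {ι m : Type*} [Nonempty ι]
    [Fintype m] {ξ : ι → m → ℝ}
    (hξ : ¬∃ (v : m → ℝ) (c : ℝ), v ≠ 0 ∧ ∀ j, ∑ k, v k * ξ j k = c) :
    Function.Injective fun θ j => linearPredictor (ξ j) θ := by
  intro θ θ' h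
  have h' : ∀ j, θ.1 + ∑ k, θ.2 k * ξ j k = θ'.1 + ∑ k, θ'.2 k * ξ j k := congrFun h
  have hβ : θ.2 = θ'.2 := by
    by_contra hne
    refine hξ ⟨θ.2 - θ'.2, θ'.1 - θ.1, sub_ne_zero.2 hne, fun j => ?_⟩
    simp only [Pi.sub_apply, sub_mul, Finset.sum_sub_distrib]
    linarith [h' j]
  obtain ⟨j⟩ := ‹Nonempty ι›
  refine Prod.ext ?_ hβ
  have hj := h' j
  rw [hβ] at hj
  linarith

lemma penLogLik_eq_sum (q κ : ℝ) {J p n : ℕ} (w : Fin J → ℝ) (ξ : Fin J → Fin p → ℝ)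
    (x : Fin n → Fin p → ℝ) :
    penLogLik q κ w ξ x = fun θ =>
      (∑ j, w j * (-qexp q (linearPredictor (ξ j) θ) + κ * log (qexp q (linearPredictor (ξ j) θ))))
        + ∑ i, log (qexp q (linearPredictor (x i) θ)) := by
  ext θ
  simp only [penLogLik, mul_add, mul_neg, Finset.sum_add_distrib, Finset.sum_neg_distrib,
    Finset.mul_sum, mul_left_comm (w _) κ, linearPredictor_apply]
  ring

theorem additive_smoothing_estimator_concave_unique_general
    (q κ : ℝ) (hq0 : 0 ≤ q) (hq1 : q ≤ 1) (hκ : 0 < κ) (J p n : ℕ)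
    (ξ : Fin J → Fin p → ℝ)
    (hξ_nohyp : ¬∃ (v : Fin p → ℝ) (c : ℝ), v ≠ 0 ∧ ∀ j, ∑ i, v i * ξ j i = c)
    (w : Fin J → ℝ) (hw_pos : ∀ j, 0 < w j) (hw_sum : ∑ j, w j = 1)
    (x : Fin n → Fin p → ℝ) (hx : ∀ i, ∃ j, x i = ξ j) :
    ConcaveOn ℝ
        {ab : ℝ × (Fin p → ℝ) | ∀ j, 0 < 1 + (1 - q) * (ab.1 + ∑ i, ab.2 i * ξ j i)}
        (penLogLik q κ w ξ x) ∧
      ∀ ab ∈ {ab : ℝ × (Fin p → ℝ) |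
          ∀ j, 0 < 1 + (1 - q) * (ab.1 + ∑ i, ab.2 i * ξ j i)},
        ∀ ab' ∈ {ab : ℝ × (Fin p → ℝ) |
          ∀ j, 0 < 1 + (1 - q) * (ab.1 + ∑ i, ab.2 i * ξ j i)},
        (∀ c ∈ {ab : ℝ × (Fin p → ℝ) |
            ∀ j, 0 < 1 + (1 - q) * (ab.1 + ∑ i, ab.2 i * ξ j i)},
          penLogLik q κ w ξ x c ≤ penLogLik q κ w ξ x ab) →
        (∀ c ∈ {ab : ℝ × (Fin p → ℝ) |
            ∀ j, 0 < 1 + (1 - q) * (ab.1 + ∑ i, ab.2 i * ξ j i)},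
          penLogLik q κ w ξ x c ≤ penLogLik q κ w ξ x ab') →
        ab = ab' := by
  set Θ := {ab : ℝ × (Fin p → ℝ) | ∀ j, 0 < 1 + (1 - q) * (ab.1 + ∑ i, ab.2 i * ξ j i)}
  have : Nonempty (Fin J) :=
    Finset.univ_nonempty_iff.1 (Finset.nonempty_of_sum_ne_zero (hw_sum ▸ one_ne_zero))
  have hsmooth : StrictConcaveOn ℝ Θ fun θ => ∑ j, w j *
      (-qexp q (linearPredictor (ξ j) θ) + κ * log (qexp q (linearPredictor (ξ j) θ))) :=
    StrictConcaveOn.sum_comp_linearMap (s := fun _ => qexpDomain q)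
      (g := fun j z => w j * (-qexp q z + κ * log (qexp q z)))
      (fun j => (strictConcaveOn_neg_qexp_add_mul_log_qexp hq0 hq1 hκ).const_mul (hw_pos j))
      (injective_linearPredictor_of_not_subset_hyperplane hξ_nohyp)
  have hdata : ConcaveOn ℝ Θ fun θ => ∑ i, log (qexp q (linearPredictor (x i) θ)) := by
    refine (ConcaveOn.sum_comp_linearMap (s := fun _ => qexpDomain q)
      (g := fun _ z => log (qexp q z)) fun _ => concaveOn_log_qexp hq1).subset
      (fun θ hθ i => ?_) hsmooth.1
    obtain ⟨j, hj⟩ := hx i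
    show linearPredictor (x i) θ ∈ qexpDomain q
    rw [hj]
    exact hθ j
  have hL : StrictConcaveOn ℝ Θ (penLogLik q κ w ξ x) := by
    rw [penLogLik_eq_sum]
    exact hsmooth.add_concaveOn hdata
  exact ⟨hL.concaveOn, fun a ha b hb hamax hbmax => hL.eq_of_isMaxOn hamax hbmax ha hb⟩

/-- concavity, and uniqueness of the additive-smoothing
estimator, for `0 ≤ q ≤ 1`: with `Θ = {(α,β) : 1 + (1-q)(α+βᵀξ_j) > 0 ∀j}`,
the penalized log-likelihood `L` is concave on the convex set `Θ`, and the
maximizer of `L` on `Θ` is unique. -/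
theorem additive_smoothing_estimator_concave_unique
    (q κ : ℝ) (hq0 : 0 ≤ q) (hq1 : q ≤ 1) (hκ : 0 < κ) (J p n : ℕ)
    (ξ : Fin J → Fin p → ℝ) (hξ_distinct : Function.Injective ξ)
    (hξ_nohyp : ¬∃ (v : Fin p → ℝ) (c : ℝ), v ≠ 0 ∧ ∀ j, ∑ i, v i * ξ j i = c)
    (w : Fin J → ℝ) (hw_pos : ∀ j, 0 < w j) (hw_sum : ∑ j, w j = 1)
    (x : Fin n → Fin p → ℝ) (hx : ∀ i, ∃ j, x i = ξ j) :
    ConcaveOn ℝ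
        {ab : ℝ × (Fin p → ℝ) | ∀ j, 0 < 1 + (1 - q) * (ab.1 + ∑ i, ab.2 i * ξ j i)}
        (penLogLik q κ w ξ x) ∧
      ∀ ab ∈ {ab : ℝ × (Fin p → ℝ) |
          ∀ j, 0 < 1 + (1 - q) * (ab.1 + ∑ i, ab.2 i * ξ j i)},
        ∀ ab' ∈ {ab : ℝ × (Fin p → ℝ) |
          ∀ j, 0 < 1 + (1 - q) * (ab.1 + ∑ i, ab.2 i * ξ j i)},
        (∀ c ∈ {ab : ℝ × (Fin p → ℝ) |
            ∀ j, 0 < 1 + (1 - q) * (ab.1 + ∑ i, ab.2 i * ξ j i)},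
          penLogLik q κ w ξ x c ≤ penLogLik q κ w ξ x ab) →
        (∀ c ∈ {ab : ℝ × (Fin p → ℝ) |
            ∀ j, 0 < 1 + (1 - q) * (ab.1 + ∑ i, ab.2 i * ξ j i)},
          penLogLik q κ w ξ x c ≤ penLogLik q κ w ξ x ab') →
        ab = ab' :=
  additive_smoothing_estimator_concave_unique_general q κ hq0 hq1 hκ J p n ξ hξ_nohyp w hw_pos
    hw_sum x hx
end
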